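/- (L²-convergence of the difference of the two point-process distribution functions.) Let $\theta > 0$ and $t \geq 0$. For each integer $n \geq 2$ let $(C^{(n)}_k)_{2 \leq k \leq \lfloor n^{t} \rfloor}$ be independent $\mathbb{N}$-valued random variables with $C^{(n)}_k$ geometrically distributed with success probability $(k-1)/(k-1 + \theta/\log n)$, and set $\Delta_n := \sum_{k=2}^{\lfloor n^{t} \rfloor} \big(C^{(n)}_k - \mathds{1}\{C^{(n)}_k \geq 1\}\big)$. Then $\mathbb{E}[\Delta_n^2] \to 0$ as $n \to \infty$; in particular $\Delta_n \to 0$ in probability. -/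

import Mathlib

set_option maxHeartbeats 1000000

open MeasureTheory ProbabilityTheory Finset Filter
open scoped ENNReal NNReal


lemma sq_succ_le_pow (m : ℕ) : (m+1)^2 ≤ 4 * 2^m := by
  induction m with
  | zero => norm_num
  | succ k ih =>
    have hk : k + 1 ≤ 2 ^ k := Nat.lt_two_pow_self (n := k)
    have : (k+2)^2 = (k+1)^2 + (2*k+3) := by ring
    have h2 : 2*k+3 ≤ 4 * 2^k := by omega
    calc (k+2)^2 = (k+1)^2 + (2*k+3) := by ring
    _ ≤ 4 * 2^k + 4 * 2^k := by omega
    _ = 4 * 2^(k+1) := by ring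

lemma invsq_sum_le (N : ℕ) : ∑ k ∈ Finset.Icc 2 N, (1:ℝ)/((k:ℝ)-1)^2 ≤ 2 := by
  have key : ∀ M : ℕ, ∑ k ∈ Finset.Icc 2 (M+2), (1:ℝ)/((k:ℝ)-1)^2 ≤ 2 - 1/((M:ℝ)+1) := by
    intro M
    induction M with
    | zero => norm_num
    | succ P ih =>
      rw [show P + 1 + 2 = (P + 2) + 1 from rfl, Finset.sum_Icc_succ_top (by omega)]
      have h1 : (0:ℝ) < (P:ℝ) + 1 := by positivity
      have h2 : (0:ℝ) < (P:ℝ) + 2 := by positivity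
      have key2 : (1:ℝ)/((P:ℝ)+2)^2 ≤ 1/((P:ℝ)+1) - 1/((P:ℝ)+2) := by
        rw [div_sub_div _ _ (ne_of_gt h1) (ne_of_gt h2), div_le_div_iff₀ (by positivity) (by positivity)]
        nlinarith
      have e1 : (((P + 2 + 1 : ℕ)):ℝ) - 1 = (P:ℝ) + 2 := by push_cast; ring
      have e2 : (((P+1):ℕ):ℝ) + 1 = (P:ℝ) + 2 := by push_cast; ring
      rw [e1, e2]
      linarith
  rcases le_or_gt N 1 with h | h
  · rw [Finset.Icc_eq_empty (by omega)]; norm_num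
  · obtain ⟨M, rfl⟩ : ∃ M, N = M + 2 := ⟨N - 2, by omega⟩
    have := key M
    have h1 : (0:ℝ) < 1/((M:ℝ)+1) := by positivity
    linarith

lemma geom_moment {Ω : Type*} [MeasureSpace Ω] [IsProbabilityMeasure (ℙ : Measure Ω)]
    (D : Ω → ℕ) (hD : Measurable D) (q s : ℝ) (hq0 : 0 ≤ q) (hq : q ≤ 1/3)
    (hs1 : s ≤ 1)
    (law : ∀ j : ℕ, ℙ {ω | D ω = j} = ENNReal.ofReal (q^j * s))
    (e : ℕ) (he1 : 1 ≤ e) (he2 : e ≤ 2) :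
    ∫⁻ ω, ((D ω - 1 : ℕ) : ℝ≥0∞)^e ∂ℙ ≤ ENNReal.ofReal (12 * q^2) := by
  set g : ℕ → ℝ≥0∞ := fun j => ((j - 1 : ℕ) : ℝ≥0∞)^e with hg
  have hgm : Measurable g := measurable_from_top
  have hmap : ∫⁻ ω, g (D ω) ∂ℙ = ∑' j : ℕ, g j * ℙ {ω | D ω = j} := by
    rw [← MeasureTheory.lintegral_map hgm hD, MeasureTheory.lintegral_countable']
    congr 1
    ext j
    rw [Measure.map_apply hD (measurableSet_singleton j)]
    rfl
  have h2q : 0 ≤ 2 * q := by linarith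
  have h2q1 : 2 * q < 1 := by linarith
  calc ∫⁻ ω, ((D ω - 1 : ℕ) : ℝ≥0∞)^e ∂ℙ
      = ∑' j : ℕ, g j * ℙ {ω | D ω = j} := hmap
    _ ≤ ∑' j : ℕ, g j * ENNReal.ofReal (q^j) := by
        apply ENNReal.tsum_le_tsum
        intro j
        rw [law j]
        apply mul_le_mul_right
        apply ENNReal.ofReal_le_ofReal
        nlinarith [pow_nonneg hq0 j]
    _ = ∑' m : ℕ, g (m+2) * ENNReal.ofReal (q^(m+2)) := by
        rw [tsum_eq_zero_add' ENNReal.summable, tsum_eq_zero_add' ENNReal.summable]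
        have g0 : g 0 = 0 := by
          simp only [hg, show ((0:ℕ) - 1 : ℕ) = 0 from rfl, Nat.cast_zero]
          exact zero_pow (by omega)
        have g1 : g 1 = 0 := by
          simp only [hg, show ((1:ℕ) - 1 : ℕ) = 0 from rfl, Nat.cast_zero]
          exact zero_pow (by omega)
        rw [show (0:ℕ)+1 = 1 from rfl]
        simp only [g0, g1, zero_mul, zero_add]
    _ ≤ ∑' m : ℕ, ENNReal.ofReal (4 * q^2 * (2*q)^m) := by
        apply ENNReal.tsum_le_tsum
        intro m
        have : g (m+2) = ENNReal.ofReal (((m+1 : ℕ):ℝ)^e) := by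
          rw [ENNReal.ofReal_pow (by positivity), ENNReal.ofReal_natCast]
          simp only [hg]
          norm_num
        rw [this, ← ENNReal.ofReal_mul (by positivity)]
        apply ENNReal.ofReal_le_ofReal
        have hb : ((m+1 : ℕ):ℝ)^e ≤ 4 * 2^m := by
          have h1 : ((m+1 : ℕ):ℝ)^e ≤ ((m+1 : ℕ):ℝ)^2 := by
            apply pow_le_pow_right₀ _ he2
            exact_mod_cast Nat.one_le_iff_ne_zero.mpr (by omega)
          have h2 : ((m+1 : ℕ):ℝ)^2 ≤ 4 * 2^m := by
            exact_mod_cast Nat.cast_le.mpr (sq_succ_le_pow m)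
          linarith
        have hq' : (0:ℝ) ≤ q^(m+2) := by positivity
        calc ((m+1 : ℕ):ℝ)^e * q^(m+2) ≤ (4 * 2^m) * q^(m+2) :=
              mul_le_mul_of_nonneg_right hb hq'
          _ = 4 * q^2 * (2*q)^m := by ring
    _ = ENNReal.ofReal (∑' m : ℕ, 4 * q^2 * (2*q)^m) := by
        rw [ENNReal.ofReal_tsum_of_nonneg (fun m => by positivity)]
        exact (summable_geometric_of_lt_one h2q h2q1).mul_left _
    _ ≤ ENNReal.ofReal (12 * q^2) := by
        apply ENNReal.ofReal_le_ofReal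
        rw [tsum_mul_left, tsum_geometric_of_lt_one h2q h2q1]
        have h3 : (1 - 2*q)⁻¹ ≤ 3 := by
          rw [inv_le_comm₀ (by linarith) (by norm_num)]
          linarith
        have hq2 : (0:ℝ) ≤ 4 * q^2 := by positivity
        nlinarith

lemma key_bound {Ω : Type*} [MeasureSpace Ω] [IsProbabilityMeasure (ℙ : Measure Ω)]
    (θ : ℝ) (hθ : 0 < θ) (n M : ℕ) (hn2 : 2 ≤ n) (hn3 : θ / Real.log n ≤ 1/3)
    (D : ℕ → Ω → ℕ)
    (hmeas : ∀ k, 2 ≤ k → k ≤ M → Measurable (D k))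
    (hindep : iIndepFun
      (fun k : (Finset.Icc 2 M : Finset ℕ) => D (k:ℕ)) ℙ)
    (hlaw : ∀ k, 2 ≤ k → k ≤ M → ∀ j : ℕ, ℙ {ω | D k ω = j} =
      ENNReal.ofReal ((θ / Real.log n / ((k:ℝ) - 1 + θ / Real.log n))^j *
        (((k:ℝ)-1)/((k:ℝ)-1+θ/Real.log n)))) :
    ∫⁻ ω, (∑ k ∈ Finset.Icc 2 M, ((D k ω - 1 : ℕ):ℝ≥0∞))^2 ∂ℙ ≤
      ENNReal.ofReal (24 * (θ/Real.log n)^2 + 576 * (θ/Real.log n)^4) := by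
  have hlog : 0 < Real.log n :=
    Real.log_pos (by exact_mod_cast Nat.lt_of_lt_of_le Nat.one_lt_two hn2)
  set L : ℝ := θ / Real.log n with hL
  have hL0 : 0 < L := div_pos hθ hlog
  set K : Finset ℕ := Finset.Icc 2 M with hK
  set X : ℕ → Ω → ℝ≥0∞ := fun k ω => ((D k ω - 1 : ℕ):ℝ≥0∞) with hX
  have hXm : ∀ k ∈ K, Measurable (X k) := by
    intro k hk
    rw [hK, Finset.mem_Icc] at hk
    exact (measurable_from_top (f := fun j : ℕ => ((j - 1 : ℕ):ℝ≥0∞))).comp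
      (hmeas k hk.1 hk.2)
  set b : ℕ → ℝ := fun k => 12 * (L / ((k:ℝ) - 1 + L))^2 with hb
  have hb0 : ∀ k, 0 ≤ b k := fun k => by rw [hb]; positivity
  set S : ℝ := ∑ k ∈ K, b k with hS
  have hS0 : 0 ≤ S := Finset.sum_nonneg fun k _ => hb0 k
  -- per-variable moments
  have hmom : ∀ k ∈ K, ∀ e : ℕ, 1 ≤ e → e ≤ 2 →
      ∫⁻ ω, (X k ω)^e ∂ℙ ≤ ENNReal.ofReal (b k) := by
    intro k hk e he1 he2
    rw [hK, Finset.mem_Icc] at hk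
    have hk1 : (1:ℝ) ≤ (k:ℝ) - 1 := by
      have : (2:ℝ) ≤ (k:ℝ) := by exact_mod_cast hk.1
      linarith
    have hden : (0:ℝ) < (k:ℝ) - 1 + L := by linarith
    have := geom_moment (D k) (hmeas k hk.1 hk.2)
      (L / ((k:ℝ) - 1 + L)) (((k:ℝ) - 1) / ((k:ℝ) - 1 + L))
      (by positivity)
      (le_trans (div_le_self hL0.le (by linarith)) hn3)
      (by rw [div_le_one hden]; linarith)
      (hlaw k hk.1 hk.2)
      e he1 he2
    exact this
  -- independence of distinct coordinates
  have hind2 : ∀ k ∈ K, ∀ l ∈ K, k ≠ l → IndepFun (X k) (X l) ℙ := by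
    intro k hk l hl hkl
    have h := hindep.indepFun (i := ⟨k, hk⟩) (j := ⟨l, hl⟩)
      (fun h => hkl (Subtype.mk_eq_mk.mp h))
    exact h.comp (measurable_from_top (f := fun j : ℕ => ((j - 1 : ℕ):ℝ≥0∞)))
      (measurable_from_top (f := fun j : ℕ => ((j - 1 : ℕ):ℝ≥0∞)))
  -- S is small
  have hSle : S ≤ 24 * L^2 := by
    have h1 : S ≤ ∑ k ∈ K, 12 * L^2 * ((1:ℝ)/((k:ℝ)-1)^2) := by
      rw [hS]
      apply Finset.sum_le_sum
      intro k hk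
      rw [hK, Finset.mem_Icc] at hk
      have hk1 : (1:ℝ) ≤ (k:ℝ) - 1 := by
        have : (2:ℝ) ≤ (k:ℝ) := by exact_mod_cast hk.1
        linarith
      have hq : L / ((k:ℝ) - 1 + L) ≤ L / ((k:ℝ) - 1) := by
        gcongr <;> linarith
      have hq0 : (0:ℝ) ≤ L / ((k:ℝ) - 1 + L) := by positivity
      rw [hb]
      have : (L / ((k:ℝ) - 1 + L))^2 ≤ (L / ((k:ℝ) - 1))^2 := by
        apply pow_le_pow_left₀ hq0 hq
      calc 12 * (L / ((k:ℝ) - 1 + L))^2 ≤ 12 * (L / ((k:ℝ) - 1))^2 := by linarith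
        _ = 12 * L^2 * ((1:ℝ)/((k:ℝ)-1)^2) := by rw [div_pow]; ring
    have h2 : ∑ k ∈ K, 12 * L^2 * ((1:ℝ)/((k:ℝ)-1)^2) = 12 * L^2 * ∑ k ∈ K, (1:ℝ)/((k:ℝ)-1)^2 := by
      rw [Finset.mul_sum]
    have h3 := invsq_sum_le M
    rw [hK] at h1 h2
    nlinarith [sq_nonneg L]
  have hmom1 : ∀ k ∈ K, ∫⁻ ω, X k ω ∂ℙ ≤ ENNReal.ofReal (b k) := by
    intro k hk
    have := hmom k hk 1 le_rfl one_le_two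
    simpa [pow_one] using this
  -- main computation
  calc ∫⁻ ω, (∑ k ∈ K, X k ω)^2 ∂ℙ
      = ∫⁻ ω, ∑ k ∈ K, ∑ l ∈ K, X k ω * X l ω ∂ℙ := by
        congr 1
        ext ω
        rw [sq, Finset.sum_mul_sum]
    _ = ∑ k ∈ K, ∑ l ∈ K, ∫⁻ ω, X k ω * X l ω ∂ℙ := by
        rw [lintegral_finset_sum (f := fun k ω => ∑ l ∈ K, X k ω * X l ω) _ (fun k hk =>
          Finset.measurable_sum _ (fun l hl => (hXm k hk).mul (hXm l hl)))]
        exact Finset.sum_congr rfl fun k hk =>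
          lintegral_finset_sum _ (fun l hl => (hXm k hk).mul (hXm l hl))
    _ ≤ ∑ k ∈ K, ENNReal.ofReal (b k + b k * S) := by
        apply Finset.sum_le_sum
        intro k hk
        rw [← Finset.add_sum_erase K _ hk, ENNReal.ofReal_add (hb0 k) (by positivity)]
        apply add_le_add
        · -- diagonal term
          have he : ∫⁻ ω, X k ω * X k ω ∂ℙ = ∫⁻ ω, (X k ω)^2 ∂ℙ := by
            congr 1; ext ω; rw [sq]
          rw [he]
          exact hmom k hk 2 (by norm_num) (by norm_num)
        · -- off-diagonal terms
          calc ∑ l ∈ K.erase k, ∫⁻ ω, X k ω * X l ω ∂ℙ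
              = ∑ l ∈ K.erase k, (∫⁻ ω, X k ω ∂ℙ) * ∫⁻ ω, X l ω ∂ℙ := by
                apply Finset.sum_congr rfl
                intro l hl
                have hlK : l ∈ K := Finset.mem_of_mem_erase hl
                have hlk : k ≠ l := fun h => (Finset.ne_of_mem_erase hl) h.symm
                exact lintegral_mul_eq_lintegral_mul_lintegral_of_indepFun
                  (hXm k hk) (hXm l hlK) (hind2 k hk l hlK hlk)
            _ ≤ ∑ l ∈ K.erase k, ENNReal.ofReal (b k) * ENNReal.ofReal (b l) := by
                apply Finset.sum_le_sum
                intro l hl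
                have hlK : l ∈ K := Finset.mem_of_mem_erase hl
                exact mul_le_mul' (hmom1 k hk) (hmom1 l hlK)
            _ = ENNReal.ofReal (b k) * ENNReal.ofReal (∑ l ∈ K.erase k, b l) := by
                rw [← Finset.mul_sum, ENNReal.ofReal_sum_of_nonneg (fun l _ => hb0 l)]
            _ ≤ ENNReal.ofReal (b k) * ENNReal.ofReal S := by
                apply mul_le_mul_right
                apply ENNReal.ofReal_le_ofReal
                rw [hS]
                exact Finset.sum_le_sum_of_subset_of_nonneg (Finset.erase_subset _ _)
                  (fun l hl _ => hb0 l)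
            _ = ENNReal.ofReal (b k * S) := by
                rw [ENNReal.ofReal_mul (hb0 k)]
    _ = ENNReal.ofReal (∑ k ∈ K, (b k + b k * S)) := by
        rw [ENNReal.ofReal_sum_of_nonneg (fun k _ => by positivity)]
    _ ≤ ENNReal.ofReal (24 * L^2 + 576 * L^4) := by
        apply ENNReal.ofReal_le_ofReal
        have : ∑ k ∈ K, (b k + b k * S) = S + S * S := by
          rw [Finset.sum_add_distrib, ← Finset.sum_mul, ← hS]
        rw [this]
        nlinarith [sq_nonneg L, sq_nonneg (L^2)]

/-- L²-convergence of the difference of the two point-process distribution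
functions: for each `n` let `(C^{(n)}_k)_{2 ≤ k ≤ ⌊n^t⌋}` be independent, with
`C^{(n)}_k` geometric with success probability `(k-1)/(k-1+θ/log n)`, and set
`Δ_n = ∑_{k=2}^{⌊n^t⌋} (C^{(n)}_k - 𝟙{C^{(n)}_k ≥ 1})`. Then `E[Δ_n²] → 0`;
in particular `Δ_n → 0` in probability. -/
theorem L2_convergence_difference
    {Ω : Type*} [MeasureSpace Ω] [IsProbabilityMeasure (ℙ : Measure Ω)]
    (θ : ℝ) (hθ : 0 < θ) (t : ℝ) (ht : 0 ≤ t) (C : ℕ → ℕ → Ω → ℕ)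
    (hmeas : ∀ n k : ℕ, 2 ≤ n → 2 ≤ k → k ≤ ⌊(n : ℝ) ^ t⌋₊ → Measurable (C n k))
    (hindep : ∀ n : ℕ, 2 ≤ n →
      iIndepFun
        (fun k : (Finset.Icc 2 ⌊(n : ℝ) ^ t⌋₊ : Finset ℕ) => C n (k : ℕ)) ℙ)
    (hlaw : ∀ n k : ℕ, 2 ≤ n → 2 ≤ k → k ≤ ⌊(n : ℝ) ^ t⌋₊ → ∀ j : ℕ,
      ℙ {ω | C n k ω = j} =
        ENNReal.ofReal ((θ / Real.log n / ((k : ℝ) - 1 + θ / Real.log n)) ^ j *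
          (((k : ℝ) - 1) / ((k : ℝ) - 1 + θ / Real.log n))))
    (Δ : ℕ → Ω → ℝ)
    (hΔ : ∀ n ω, Δ n ω = ∑ k ∈ Finset.Icc 2 ⌊(n : ℝ) ^ t⌋₊,
      ((C n k ω : ℝ) - if 1 ≤ C n k ω then 1 else 0)) :
    Tendsto (fun n : ℕ => ∫ ω, (Δ n ω) ^ 2 ∂ℙ) atTop (nhds 0) ∧
    ∀ ε : ℝ, 0 < ε →
      Tendsto (fun n : ℕ => ℙ {ω | ε ≤ |Δ n ω|}) atTop (nhds 0) := by
  -- rewrite the summand as a cast of a truncated subtraction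
  have hcast : ∀ j : ℕ, (j:ℝ) - (if 1 ≤ j then 1 else 0) = ((j - 1 : ℕ) : ℝ) := by
    intro j
    cases j with
    | zero => simp
    | succ m => simp [Nat.succ_sub_one]
  have hΔ' : ∀ n ω, Δ n ω = ∑ k ∈ Finset.Icc 2 ⌊(n : ℝ) ^ t⌋₊, ((C n k ω - 1 : ℕ) : ℝ) := by
    intro n ω
    rw [hΔ]
    exact Finset.sum_congr rfl fun k _ => hcast _
  -- small n have an empty index set
  have hempty : ∀ n : ℕ, n < 2 → Finset.Icc 2 ⌊(n : ℝ) ^ t⌋₊ = ∅ := by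
    intro n hn
    apply Finset.Icc_eq_empty
    intro hle
    have hle1 : ((n:ℝ)) ^ t ≤ 1 := by
      interval_cases n
      · rcases eq_or_lt_of_le ht with h | h
        · rw [← h]; simp
        · rw [Nat.cast_zero, Real.zero_rpow (ne_of_gt h)]; norm_num
      · rw [Nat.cast_one, Real.one_rpow]
    have : ⌊(n : ℝ) ^ t⌋₊ ≤ 1 := by
      calc ⌊(n : ℝ) ^ t⌋₊ ≤ ⌊(1:ℝ)⌋₊ := Nat.floor_mono hle1
        _ = 1 := Nat.floor_one
    omega
  -- measurability of Δ n for every n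
  have hmeasΔ : ∀ n, Measurable (Δ n) := by
    intro n
    have h : Δ n = fun ω => ∑ k ∈ Finset.Icc 2 ⌊(n : ℝ) ^ t⌋₊, ((C n k ω - 1 : ℕ) : ℝ) :=
      funext (hΔ' n)
    rw [h]
    rcases lt_or_ge n 2 with hn | hn
    · rw [hempty n hn]
      simp only [Finset.sum_empty]
      exact measurable_const
    · apply Finset.measurable_sum
      intro k hk
      rw [Finset.mem_Icc] at hk
      exact (measurable_from_top (f := fun j : ℕ => ((j - 1 : ℕ):ℝ))).comp
        (hmeas n k hn hk.1 hk.2)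
  have hΔ0 : ∀ n ω, 0 ≤ Δ n ω := by
    intro n ω
    rw [hΔ']
    exact Finset.sum_nonneg fun k _ => Nat.cast_nonneg _
  -- identification of the square as an ℝ≥0∞-valued sum
  have hofReal : ∀ n ω, ENNReal.ofReal ((Δ n ω)^2) =
      (∑ k ∈ Finset.Icc 2 ⌊(n : ℝ) ^ t⌋₊, ((C n k ω - 1 : ℕ):ℝ≥0∞))^2 := by
    intro n ω
    rw [hΔ' n ω, ENNReal.ofReal_pow (Finset.sum_nonneg fun k _ => Nat.cast_nonneg _),
      ENNReal.ofReal_sum_of_nonneg (fun k _ => Nat.cast_nonneg _)]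
    congr 1
    exact Finset.sum_congr rfl fun k _ => ENNReal.ofReal_natCast _
  -- the lintegral of the square
  set I : ℕ → ℝ≥0∞ := fun n => ∫⁻ ω, ENNReal.ofReal ((Δ n ω)^2) ∂ℙ with hI
  -- the upper bound sequence
  have hlogtop : Tendsto (fun n : ℕ => Real.log n) atTop atTop :=
    Real.tendsto_log_atTop.comp tendsto_natCast_atTop_atTop
  have hLlim : Tendsto (fun n : ℕ => θ / Real.log n) atTop (nhds 0) :=
    Tendsto.div_atTop tendsto_const_nhds hlogtop
  have hBlim : Tendsto
      (fun n : ℕ => 24 * (θ/Real.log n)^2 + 576 * (θ/Real.log n)^4) atTop (nhds 0) := by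
    have := ((hLlim.pow 2).const_mul 24).add ((hLlim.pow 4).const_mul 576)
    simpa using this
  -- eventual bound on I
  have hIbound : ∀ᶠ n : ℕ in atTop,
      I n ≤ ENNReal.ofReal (24 * (θ/Real.log n)^2 + 576 * (θ/Real.log n)^4) := by
    filter_upwards [eventually_ge_atTop 2, hlogtop.eventually_ge_atTop (3*θ)] with n hn2 hn3
    have hlogpos : 0 < Real.log n := lt_of_lt_of_le (by linarith) hn3
    have hn3' : θ / Real.log n ≤ 1/3 := by
      rw [div_le_iff₀ hlogpos]
      linarith
    have heq : I n = ∫⁻ ω, (∑ k ∈ Finset.Icc 2 ⌊(n : ℝ) ^ t⌋₊,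
        ((C n k ω - 1 : ℕ):ℝ≥0∞))^2 ∂ℙ := by
      rw [hI]
      exact lintegral_congr fun ω => hofReal n ω
    rw [heq]
    exact key_bound θ hθ n ⌊(n : ℝ) ^ t⌋₊ hn2 hn3' (C n)
      (fun k hk1 hk2 => hmeas n k hn2 hk1 hk2) (hindep n hn2)
      (fun k hk1 hk2 => hlaw n k hn2 hk1 hk2)
  -- I tends to 0
  have hItend : Tendsto I atTop (nhds 0) := by
    have hupper : Tendsto (fun n : ℕ => ENNReal.ofReal
        (24 * (θ/Real.log n)^2 + 576 * (θ/Real.log n)^4)) atTop (nhds 0) := by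
      have : Tendsto (fun n : ℕ => ENNReal.ofReal
          (24 * (θ/Real.log n)^2 + 576 * (θ/Real.log n)^4)) atTop (nhds (ENNReal.ofReal 0)) :=
        (ENNReal.continuous_ofReal.tendsto 0).comp hBlim
      simpa using this
    exact tendsto_of_tendsto_of_tendsto_of_le_of_le' tendsto_const_nhds hupper
      (Eventually.of_forall fun n => zero_le) hIbound
  constructor
  · -- L² convergence
    have heq : (fun n : ℕ => ∫ ω, (Δ n ω) ^ 2 ∂ℙ) = fun n => (I n).toReal := by
      funext n
      rw [hI]
      exact integral_eq_lintegral_of_nonneg_ae (Eventually.of_forall fun ω => sq_nonneg _)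
        ((hmeasΔ n).pow_const 2).aestronglyMeasurable
    rw [heq]
    have := (ENNReal.tendsto_toReal (by simp : (0:ℝ≥0∞) ≠ ⊤)).comp hItend
    simpa [Function.comp_def] using this
  · -- convergence in probability
    intro ε hε
    have hc : ENNReal.ofReal (ε^2) ≠ 0 := by
      simp only [ne_eq, ENNReal.ofReal_eq_zero, not_le]
      positivity
    have hc' : ENNReal.ofReal (ε^2) ≠ ⊤ := ENNReal.ofReal_ne_top
    have hbound : ∀ n, ℙ {ω | ε ≤ |Δ n ω|} ≤ I n / ENNReal.ofReal (ε^2) := by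
      intro n
      have hsub : {ω | ε ≤ |Δ n ω|} ⊆
          {ω | ENNReal.ofReal (ε^2) ≤ ENNReal.ofReal ((Δ n ω)^2)} := by
        intro ω hω
        simp only [Set.mem_setOf_eq] at hω ⊢
        apply ENNReal.ofReal_le_ofReal
        calc ε^2 ≤ |Δ n ω|^2 := pow_le_pow_left₀ hε.le hω 2
          _ = (Δ n ω)^2 := sq_abs _
      calc ℙ {ω | ε ≤ |Δ n ω|} ≤ ℙ {ω | ENNReal.ofReal (ε^2) ≤ ENNReal.ofReal ((Δ n ω)^2)} :=
            measure_mono hsub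
        _ ≤ I n / ENNReal.ofReal (ε^2) := by
            rw [hI]
            exact meas_ge_le_lintegral_div
              (((hmeasΔ n).pow_const 2).ennreal_ofReal).aemeasurable hc hc'
    have hup : Tendsto (fun n => I n / ENNReal.ofReal (ε^2)) atTop (nhds 0) := by
      have := ENNReal.Tendsto.mul_const (b := (ENNReal.ofReal (ε^2))⁻¹) hItend
        (Or.inr (by simpa using hc))
      simp only [zero_mul] at this
      simpa [div_eq_mul_inv] using this
    exact tendsto_of_tendsto_of_tendsto_of_le_of_le' tendsto_const_nhds hup
      (Eventually.of_forall fun n => zero_le) (Eventually.of_forall hbound)
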